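/- For integers 1 ≤ L < M < ∞ and real 0 ≤ ε ≤ 1 − L/M, the maximum of the conditional Shannon entropy H(X|Y) over all pairs (X, Y) with X valued in {1,...,M} and P_e^{(L)}(X|Y) ≤ ε equals h₂(ε) + (1−ε) log L + ε log(M−L), where h₂ is the binary entropy function. -/

import Mathlib

/-! The Fano-type-0 distribution attains the bound. Conversely, let `A` be a set of `L` most likely
values of `W y` and `e_y = 1 - W y (A)` its list error. Gibbs' inequality against the reference
distribution with mass `(1 - ε) / L` on `A` and `ε / (M - L)` elsewhere bounds `H(W y)` by
`(1 - e_y) log (L / (1 - ε)) + e_y log ((M - L) / ε)`. This is affine in `e_y`, so it averages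
to the same expression in `P_e ≤ ε`; it is nondecreasing in the error since `ε ≤ 1 - L / M`
means `ε / (M - L) ≤ (1 - ε) / L`, and at the error `ε` it equals the claimed maximum. -/

noncomputable section

def IsPmf {α : Type*} (p : α → ℝ) : Prop := (∀ x, 0 ≤ p x) ∧ ∑' x, p x = 1

def topSum (p : ℕ → ℝ) (k : ℕ) : ℝ :=
  sSup {t : ℝ | ∃ s : Finset ℕ, s.card = k ∧ t = ∑ x ∈ s, p x}

/-- Shannon entropy (natural logarithm). -/
def shEnt (p : ℕ → ℝ) : ℝ := ∑' x, Real.negMulLog (p x)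

/-- Binary entropy function. -/
def binEnt (u : ℝ) : ℝ := Real.negMulLog u + Real.negMulLog (1 - u)

open Finset Real

namespace IsPmf

variable {α : Type*} {p : α → ℝ}

lemma summable (hp : IsPmf p) : Summable p := by
  by_contra h
  simpa [tsum_eq_zero_of_not_summable h] using hp.2

lemma sum_le_one (hp : IsPmf p) (s : Finset α) : ∑ x ∈ s, p x ≤ 1 :=
  hp.2 ▸ hp.summable.sum_le_tsum s fun x _ => hp.1 x

lemma sum_eq_one (hp : IsPmf p) {s : Finset α} (hs : ∀ x, p x ≠ 0 → x ∈ s) :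
    ∑ x ∈ s, p x = 1 := by
  rw [← hp.2, tsum_eq_sum fun x hx => not_imp_comm.1 (hs x) hx]

lemma le_one (hp : IsPmf p) (x : α) : p x ≤ 1 := by
  simpa using hp.sum_le_one {x}

lemma summable_mul_affine (hp : IsPmf p) {f : α → ℝ} (hf : Summable fun y => p y * f y)
    (a b : ℝ) : Summable fun y => p y * ((1 - f y) * a + f y * b) :=
  ((hp.summable.mul_right a).add (hf.mul_left (b - a))).congr fun y => by ring

lemma tsum_mul_affine (hp : IsPmf p) {f : α → ℝ} (hf : Summable fun y => p y * f y)
    (a b : ℝ) :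
    ∑' y, p y * ((1 - f y) * a + f y * b) =
      (1 - ∑' y, p y * f y) * a + (∑' y, p y * f y) * b := by
  calc ∑' y, p y * ((1 - f y) * a + f y * b)
      = ∑' y, (p y * a + (b - a) * (p y * f y)) := tsum_congr fun y => by ring
    _ = (∑' y, p y) * a + (b - a) * ∑' y, p y * f y := by
      rw [(hp.summable.mul_right a).tsum_add (hf.mul_left _), tsum_mul_right, tsum_mul_left]
    _ = _ := by rw [hp.2]; ring

end IsPmf

lemma shEnt_eq_sum {p : ℕ → ℝ} {s : Finset ℕ} (hs : ∀ x, p x ≠ 0 → x ∈ s) :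
    shEnt p = ∑ x ∈ s, negMulLog (p x) :=
  tsum_eq_sum fun x hx => by simp [not_imp_comm.1 (hs x) hx]

lemma shEnt_nonneg {p : ℕ → ℝ} (hp : IsPmf p) {s : Finset ℕ} (hs : ∀ x, p x ≠ 0 → x ∈ s) :
    0 ≤ shEnt p := by
  rw [shEnt_eq_sum hs]
  exact sum_nonneg fun x _ => negMulLog_nonneg (hp.1 x) (hp.le_one x)

section topSum

variable {p : ℕ → ℝ}

lemma sum_le_topSum (hp : IsPmf p) (s : Finset ℕ) : ∑ x ∈ s, p x ≤ topSum p s.card :=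
  le_csSup ⟨1, by rintro t ⟨s, -, rfl⟩; exact hp.sum_le_one s⟩ ⟨s, rfl, rfl⟩

lemma topSum_le_one (hp : IsPmf p) (k : ℕ) : topSum p k ≤ 1 :=
  csSup_le ⟨_, range k, card_range k, rfl⟩ fun _ ⟨s, _, hs⟩ => hs ▸ hp.sum_le_one s

lemma topSum_nonneg (hp : IsPmf p) (k : ℕ) : 0 ≤ topSum p k :=
  (sum_nonneg fun x _ => hp.1 x).trans (card_range k ▸ sum_le_topSum hp (range k))

lemma exists_subset_card_eq_sum_eq_topSum (hp : IsPmf p) {s : Finset ℕ}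
    (hs : ∀ x, p x ≠ 0 → x ∈ s) {k : ℕ} (hk : k ≤ s.card) :
    ∃ A ⊆ s, A.card = k ∧ ∑ x ∈ A, p x = topSum p k := by
  obtain ⟨A, hA, hAmax⟩ := exists_max_image (s.powersetCard k) (fun A => ∑ x ∈ A, p x)
    (powersetCard_nonempty.2 hk)
  rw [mem_powersetCard] at hA
  refine ⟨A, hA.1, hA.2, le_antisymm (hA.2 ▸ sum_le_topSum hp A) ?_⟩
  refine csSup_le ⟨_, range k, card_range k, rfl⟩ ?_
  rintro _ ⟨t, ht, rfl⟩
  obtain ⟨B, hB, hBs, hBk⟩ := exists_subsuperset_card_eq (inter_subset_right (s₁ := t))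
    ((card_le_card inter_subset_left).trans ht.le) hk
  calc ∑ x ∈ t, p x = ∑ x ∈ t ∩ s, p x :=
        (sum_subset inter_subset_left fun x hxt hx =>
          by_contra fun h => hx (mem_inter.2 ⟨hxt, hs x h⟩)).symm
    _ ≤ ∑ x ∈ B, p x := sum_le_sum_of_subset_of_nonneg hB fun x _ _ => hp.1 x
    _ ≤ ∑ x ∈ A, p x := hAmax B (mem_powersetCard.2 ⟨hBs, hBk⟩)

end topSum

lemma negMulLog_add_mul_log_le {p r : ℝ} (hp : 0 ≤ p) (hr : 0 < r) :
    negMulLog p + p * log r ≤ r - p := by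
  have h := negMulLog_mul r (p / r)
  rw [mul_div_cancel₀ p hr.ne'] at h
  have hle := mul_le_mul_of_nonneg_left (negMulLog_le_one_sub_self (div_nonneg hp hr.le)) hr.le
  rw [h, negMulLog]
  field_simp at hle ⊢
  linarith

lemma sum_negMulLog_le_sum_mul_neg_log {ι : Type*} (s : Finset ι) {p r : ι → ℝ}
    (hp : ∀ x ∈ s, 0 ≤ p x) (hr : ∀ x ∈ s, 0 ≤ r x) (hpr : ∀ x ∈ s, p x ≠ 0 → r x ≠ 0)
    (hps : ∑ x ∈ s, p x = 1) (hrs : ∑ x ∈ s, r x ≤ 1) :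
    ∑ x ∈ s, negMulLog (p x) ≤ ∑ x ∈ s, p x * -log (r x) := by
  have hpoint : ∀ x ∈ s, negMulLog (p x) + p x * log (r x) ≤ r x - p x := fun x hx => by
    by_cases h : p x = 0
    · simpa [h] using hr x hx
    · exact negMulLog_add_mul_log_le (hp x hx) ((hr x hx).lt_of_ne' (hpr x hx h))
  have := sum_le_sum hpoint
  rw [sum_add_distrib, sum_sub_distrib, hps] at this
  simp only [mul_neg, sum_neg_distrib]
  linarith

lemma mul_neg_log_div (x : ℝ) {n : ℝ} (hn : n ≠ 0) :
    x * -log (x / n) = negMulLog x + x * log n := by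
  rcases eq_or_ne x 0 with rfl | hx
  · simp
  · rw [log_div hx hn, negMulLog]; ring

lemma shEnt_le_of_two_level {p : ℕ → ℝ} (hp : IsPmf p) {s A : Finset ℕ} (hAs : A ⊆ s)
    (hs : ∀ x, p x ≠ 0 → x ∈ s) {a b : ℝ} (ha : 0 < a) (hb : 0 ≤ b)
    (hab : A.card * a + (s \ A).card * b ≤ 1) (hpb : ∀ x ∈ s \ A, p x ≠ 0 → b ≠ 0) :
    shEnt p ≤ (∑ x ∈ A, p x) * -log a + (1 - ∑ x ∈ A, p x) * -log b := by
  classical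
  set r : ℕ → ℝ := fun x => if x ∈ A then a else b
  have hsplit (f : ℕ → ℝ → ℝ) :
      ∑ x ∈ s, f x (r x) = ∑ x ∈ A, f x a + ∑ x ∈ s \ A, f x b := by
    rw [← sum_sdiff hAs, add_comm]
    congr 1
    · exact sum_congr rfl fun x hx => by simp [r, hx]
    · exact sum_congr rfl fun x hx => by simp [r, (mem_sdiff.1 hx).2]
  have hps := hp.sum_eq_one hs
  have hout : ∑ x ∈ s \ A, p x = 1 - ∑ x ∈ A, p x := by rw [sum_sdiff_eq_sub hAs, hps]
  have hr : ∀ x ∈ s, 0 ≤ r x := fun x _ => by by_cases hx : x ∈ A <;> simp [r, hx, ha.le, hb]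
  have hpr : ∀ x ∈ s, p x ≠ 0 → r x ≠ 0 := fun x hxs hpx => by
    by_cases hx : x ∈ A
    · simp [r, hx, ha.ne']
    · simpa [r, hx] using hpb x (mem_sdiff.2 ⟨hxs, hx⟩) hpx
  have hrs : ∑ x ∈ s, r x ≤ 1 := by simpa [hsplit fun _ t => t] using hab
  calc shEnt p = ∑ x ∈ s, negMulLog (p x) := shEnt_eq_sum hs
    _ ≤ ∑ x ∈ s, p x * -log (r x) :=
      sum_negMulLog_le_sum_mul_neg_log s (fun x _ => hp.1 x) hr hpr hps hrs
    _ = _ := by rw [hsplit fun x t => p x * -log t, ← sum_mul, ← sum_mul, hout]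

section Fano

variable {L M : ℕ} {ε : ℝ}

/-- Cross-entropy of the Fano-type-0 distribution with error `e` against the one with error `ε`.
Being affine in `e`, it is the tangent at `ε` of the concave bound `e ↦ fanoTangent L M e e`,
so it survives averaging over `Y` without any Jensen argument. -/
def fanoTangent (L M : ℕ) (ε e : ℝ) : ℝ :=
  (1 - e) * -log ((1 - ε) / L) + e * -log (ε / (M - L))

lemma fanoTangent_self (hL : 1 ≤ L) (hLM : L < M) :
    fanoTangent L M ε ε = binEnt ε + (1 - ε) * log L + ε * log ((M : ℝ) - L) := by
  have hL' : (L : ℝ) ≠ 0 := by positivity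
  have hML : (M : ℝ) - L ≠ 0 := sub_ne_zero.2 (by exact_mod_cast hLM.ne')
  rw [fanoTangent, mul_neg_log_div _ hL', mul_neg_log_div _ hML, binEnt]
  ring

lemma fanoTangent_le_fanoTangent_self (hL : 1 ≤ L) (hLM : L < M)
    (hε1 : ε ≤ 1 - (L : ℝ) / M) {e : ℝ} (he0 : 0 ≤ e) (he : e ≤ ε) :
    fanoTangent L M ε e ≤ fanoTangent L M ε ε := by
  obtain rfl | hε := (he0.trans he).eq_or_lt
  · rw [le_antisymm he he0]
  have hL' : (0 : ℝ) < L := by positivity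
  have hML : (0 : ℝ) < M - L := sub_pos.2 (by exact_mod_cast hLM)
  have hmass : ε / (M - L) ≤ (1 - ε) / L := by
    rw [div_le_div_iff₀ hML hL']
    have hM : (0 : ℝ) < M := hL'.trans (by exact_mod_cast hLM)
    rw [le_sub_iff_add_le, ← le_sub_iff_add_le', div_le_iff₀ hM] at hε1
    nlinarith
  have hslope : 0 ≤ log ((1 - ε) / L) - log (ε / (M - L)) :=
    sub_nonneg.2 (log_le_log (by positivity) hmass)
  unfold fanoTangent
  nlinarith [mul_le_mul_of_nonneg_left (sub_nonneg.2 he) hslope]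

lemma shEnt_le_fanoTangent (hL : 1 ≤ L) (hLM : L < M) (hε0 : 0 ≤ ε) (hε1 : ε < 1) {p : ℕ → ℝ}
    (hp : IsPmf p) (hs : ∀ x, p x ≠ 0 → x ∈ Ioc 0 M) (hε : 0 < ε ∨ topSum p L = 1) :
    shEnt p ≤ fanoTangent L M ε (1 - topSum p L) := by
  obtain ⟨A, hAs, hAcard, hAsum⟩ :=
    exists_subset_card_eq_sum_eq_topSum hp hs (k := L) (by simpa using hLM.le)
  have hL' : (0 : ℝ) < L := by positivity
  have hML : (0 : ℝ) < M - L := sub_pos.2 (by exact_mod_cast hLM)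
  have hcard : ((Ioc 0 M \ A).card : ℝ) = M - L := by
    rw [card_sdiff_of_subset hAs, hAcard, Nat.card_Ioc, Nat.sub_zero, Nat.cast_sub hLM.le]
  have hpb : ∀ x ∈ Ioc 0 M \ A, p x ≠ 0 → ε / (M - L) ≠ 0 := fun x hx hpx => by
    refine div_ne_zero (hε.resolve_right fun htop => hpx ?_).ne' hML.ne'
    have hout : ∑ x ∈ Ioc 0 M \ A, p x = 0 := by
      rw [sum_sdiff_eq_sub hAs, hp.sum_eq_one hs, hAsum, htop, sub_self]
    exact (sum_eq_zero_iff_of_nonneg fun x _ => hp.1 x).1 hout x hx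
  have hab : A.card * ((1 - ε) / L) + (Ioc 0 M \ A).card * (ε / (M - L)) ≤ 1 := by
    rw [hAcard, hcard]; field_simp; linarith
  calc shEnt p ≤ _ := shEnt_le_of_two_level hp hAs hs (by have := sub_pos.2 hε1; positivity)
        (by positivity) hab hpb
    _ = _ := by rw [hAsum, fanoTangent]; ring

def fanoP (L M : ℕ) (ε : ℝ) (x : ℕ) : ℝ :=
  if x ∈ Ioc 0 L then (1 - ε) / L else if x ∈ Ioc L M then ε / (M - L) else 0

lemma fanoP_nonneg (hε0 : 0 ≤ ε) (hε1 : ε ≤ 1) (x : ℕ) : 0 ≤ fanoP L M ε x := by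
  have : 0 ≤ 1 - ε := sub_nonneg.2 hε1
  unfold fanoP
  split_ifs with h₁ h₂
  · positivity
  · have : (L : ℝ) < M := by exact_mod_cast (mem_Ioc.1 h₂).1.trans_le (mem_Ioc.1 h₂).2
    exact div_nonneg hε0 (sub_nonneg.2 this.le)
  · exact le_rfl

lemma fanoP_of_mem_Ioc {x : ℕ} (hx : x ∈ Ioc 0 L) : fanoP L M ε x = (1 - ε) / L := if_pos hx

lemma mem_Ioc_of_fanoP_ne_zero (hLM : L ≤ M) {x : ℕ} (hx : fanoP L M ε x ≠ 0) :
    x ∈ Ioc 0 M := by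
  unfold fanoP at hx
  split_ifs at hx with h₁ h₂
  · exact Ioc_subset_Ioc_right hLM h₁
  · exact Ioc_subset_Ioc_left (Nat.zero_le L) h₂
  · exact absurd rfl hx

lemma tsum_comp_fanoP (hLM : L ≤ M) {f : ℝ → ℝ} (hf : f 0 = 0) :
    ∑' x, f (fanoP L M ε x) = L * f ((1 - ε) / L) + (M - L : ℕ) * f (ε / (M - L)) := by
  rw [tsum_eq_sum (s := Ioc 0 M) fun x hx => by
      rw [not_imp_comm.1 (mem_Ioc_of_fanoP_ne_zero hLM) hx, hf],
    ← sum_Ioc_consecutive _ (Nat.zero_le L) hLM]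
  have h₂ : ∀ x ∈ Ioc L M, fanoP L M ε x = ε / (M - L) := fun x hx => by
    rw [fanoP, if_neg fun h => by simp only [mem_Ioc] at h hx; omega, if_pos hx]
  rw [sum_congr rfl fun x hx => congrArg f (fanoP_of_mem_Ioc hx),
    sum_congr rfl fun x hx => congrArg f (h₂ x hx)]
  simp

lemma isPmf_fanoP (hL : 1 ≤ L) (hLM : L < M) (hε0 : 0 ≤ ε) (hε1 : ε ≤ 1) :
    IsPmf (fanoP L M ε) := by
  refine ⟨fanoP_nonneg hε0 hε1, ?_⟩
  have hL' : (L : ℝ) ≠ 0 := by positivity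
  have hML : (M : ℝ) - L ≠ 0 := sub_ne_zero.2 (by exact_mod_cast hLM.ne')
  have h := tsum_comp_fanoP (L := L) (M := M) (ε := ε) (f := id) hLM.le rfl
  simp only [id] at h
  rw [h, Nat.cast_sub hLM.le]
  field_simp
  ring

lemma shEnt_fanoP (hL : 1 ≤ L) (hLM : L < M) :
    shEnt (fanoP L M ε) = fanoTangent L M ε ε := by
  have hL' : (L : ℝ) ≠ 0 := by positivity
  have hML : (M : ℝ) - L ≠ 0 := sub_ne_zero.2 (by exact_mod_cast hLM.ne')
  rw [shEnt, tsum_comp_fanoP hLM.le negMulLog_zero, Nat.cast_sub hLM.le, fanoTangent, negMulLog,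
    negMulLog]
  field_simp

lemma one_sub_le_topSum_fanoP (hL : 1 ≤ L) (hLM : L < M) (hε0 : 0 ≤ ε) (hε1 : ε ≤ 1) :
    1 - ε ≤ topSum (fanoP L M ε) L := by
  have hL' : (L : ℝ) ≠ 0 := by positivity
  have h := sum_le_topSum (isPmf_fanoP hL hLM hε0 hε1) (Ioc 0 L)
  rwa [Nat.card_Ioc, Nat.sub_zero, sum_congr rfl fun x hx => fanoP_of_mem_Ioc hx, sum_const,
    Nat.card_Ioc, Nat.sub_zero, nsmul_eq_mul, mul_div_cancel₀ _ hL'] at h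

theorem tsum_mul_shEnt_le_fanoTangent (hL : 1 ≤ L) (hLM : L < M) (hε0 : 0 ≤ ε)
    (hε1 : ε ≤ 1 - (L : ℝ) / M) {β : Type*} {q : β → ℝ} {W : β → ℕ → ℝ} (hq : IsPmf q)
    (hW : ∀ y, IsPmf (W y)) (hs : ∀ y x, W y x ≠ 0 → x ∈ Ioc 0 M)
    (herr : 1 - ∑' y, q y * topSum (W y) L ≤ ε) :
    ∑' y, q y * shEnt (W y) ≤ fanoTangent L M ε ε := by
  set T : β → ℝ := fun y => topSum (W y) L
  have hTle : ∀ y, q y * T y ≤ q y := fun y =>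
    mul_le_of_le_one_right (hq.1 y) (topSum_le_one (hW y) L)
  have hT : Summable fun y => q y * T y := Summable.of_nonneg_of_le
    (fun y => mul_nonneg (hq.1 y) (topSum_nonneg (hW y) L)) hTle hq.summable
  have hET : ∑' y, q y * T y ≤ 1 := hq.2 ▸ hT.tsum_le_tsum hTle hq.summable
  have hM : (0 : ℝ) < M := by exact_mod_cast (Nat.zero_le L).trans_lt hLM
  have hε1' : ε < 1 := hε1.trans_lt (sub_lt_self 1 (by positivity))
  -- For `ε = 0` the reference mass off the top `L` values is `0`, so Gibbs' inequality needs
  -- `W y` to vanish there.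
  have htopSum_eq_one : ε = 0 → ∀ y, q y ≠ 0 → T y = 1 := by
    rintro rfl y hy
    by_contra hTy
    have := hT.tsum_lt_tsum hTle (mul_lt_of_lt_one_right ((hq.1 y).lt_of_ne' hy)
      ((topSum_le_one (hW y) L).lt_of_ne hTy)) hq.summable
    linarith [hq.2]
  have hpoint : ∀ y, q y * shEnt (W y) ≤ q y * fanoTangent L M ε (1 - T y) := fun y => by
    by_cases hy : q y = 0
    · simp [hy]
    refine mul_le_mul_of_nonneg_left
      (shEnt_le_fanoTangent hL hLM hε0 hε1' (hW y) (hs y) ?_) (hq.1 y)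
    exact hε0.lt_or_eq.imp_right fun h => htopSum_eq_one h.symm y hy
  have haff : ∀ e, fanoTangent L M ε (1 - e) =
      (1 - e) * -log (ε / (M - L)) + e * -log ((1 - ε) / L) := fun e => by
    rw [fanoTangent]; ring
  have hRsumm : Summable fun y => q y * fanoTangent L M ε (1 - T y) := by
    simpa only [haff] using hq.summable_mul_affine hT _ _
  calc ∑' y, q y * shEnt (W y) ≤ ∑' y, q y * fanoTangent L M ε (1 - T y) :=
        (hRsumm.of_nonneg_of_le (fun y => mul_nonneg (hq.1 y) (shEnt_nonneg (hW y) (hs y)))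
          hpoint).tsum_le_tsum hpoint hRsumm
    _ = fanoTangent L M ε (1 - ∑' y, q y * T y) := by
      simp only [haff]; exact hq.tsum_mul_affine hT _ _
    _ ≤ fanoTangent L M ε ε :=
      fanoTangent_le_fanoTangent_self hL hLM hε1 (sub_nonneg.2 hET) herr

end Fano

/-- Fano's inequality with list decoding for Shannon entropy: over all pairs
`(X,Y)` with `X` valued in `{1,…,M}` and `P_e^{(L)}(X|Y) ≤ ε`, the maximum of
`H(X|Y)` equals `h₂(ε) + (1−ε) log L + ε log(M−L)`. -/
theorem stmt_8 (L M : ℕ) (ε : ℝ) (hL : 1 ≤ L) (hLM : L < M)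
    (hε0 : 0 ≤ ε) (hε1 : ε ≤ 1 - (L : ℝ) / M) :
    (∀ (β : Type) (q : β → ℝ) (W : β → ℕ → ℝ), IsPmf q → (∀ y, IsPmf (W y)) →
      (∀ y x, W y x ≠ 0 → 1 ≤ x ∧ x ≤ M) →
      1 - ∑' y, q y * topSum (W y) L ≤ ε →
      ∑' y, q y * shEnt (W y) ≤
        binEnt ε + (1 - ε) * Real.log L + ε * Real.log ((M : ℝ) - L)) ∧
    (∃ (β : Type) (q : β → ℝ) (W : β → ℕ → ℝ), IsPmf q ∧ (∀ y, IsPmf (W y)) ∧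
      (∀ y x, W y x ≠ 0 → 1 ≤ x ∧ x ≤ M) ∧
      1 - ∑' y, q y * topSum (W y) L ≤ ε ∧
      ∑' y, q y * shEnt (W y) =
        binEnt ε + (1 - ε) * Real.log L + ε * Real.log ((M : ℝ) - L)) := by
  rw [← fanoTangent_self hL hLM]
  have hε1' : ε ≤ 1 := hε1.trans (sub_le_self 1 (by positivity))
  refine ⟨fun β q W hq hW hs herr => tsum_mul_shEnt_le_fanoTangent hL hLM hε0 hε1 hq hW
    (fun y x h => mem_Ioc.2 (hs y x h)) herr, Unit, fun _ => 1, fun _ => fanoP L M ε,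
    ⟨fun _ => zero_le_one, by simp⟩, fun _ => isPmf_fanoP hL hLM hε0 hε1',
    fun _ x h => mem_Ioc.1 (mem_Ioc_of_fanoP_ne_zero hLM.le h), ?_, ?_⟩
  · simpa using sub_le_comm.1 (one_sub_le_topSum_fanoP hL hLM hε0 hε1')
  · simpa using shEnt_fanoP hL hLM
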